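/- In a special abstract rank one group X with abelian unipotent subgroups A and B, setting H = N_X(A) ∩ N_X(B), for all nontrivial a₁, a₂ in A with a₁a₂ ≠ 1 one has a₁ ∈ a₂·[A,H], i.e. a₁ and a₂ lie in the same coset of the commutator subgroup [A,H] in A. -/

import Mathlib

/-- Conjugate `S ^ g = g⁻¹ S g` of a subgroup. -/
def conjSub {X : Type*} [Group X] (S : Subgroup X) (g : X) : Subgroup X :=
  S.map ((MulAut.conj g⁻¹).toMonoidHom)

/-!
Put `μ(a) = b(a) a⁻¹ b(a)` for `1 ≠ a ∈ A`. Because `b(a⁻¹) = b(a)⁻¹`, conjugation by `μ(a)`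
swaps `A` and `B`, and since `A ∩ B = 1` one gets the braid relation `a μ(a) = b(a) a⁻¹`.
Let `x ∈ A` be the element with `B^x = A^{b(a₁) b(a₂)}`. As `a ↦ B^a` is injective on `A`,
conjugating `b(a₁a₂)` by `μ(a₁)` and by `μ(a₂)` yields `x a₁⁻¹` and `x a₂⁻¹` respectively.
So these two elements of `A` are conjugate under `μ(a₁)⁻¹ μ(a₂) ∈ H`, and their quotient
`a₁ a₂⁻¹` is a commutator of an element of `A` with an element of `H`.
-/

section conjSub

variable {X : Type*} [Group X]

lemma mem_conjSub_iff {S : Subgroup X} {g y : X} : y ∈ conjSub S g ↔ g * y * g⁻¹ ∈ S := by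
  simp only [conjSub, Subgroup.mem_map, MulEquiv.coe_toMonoidHom, MulAut.conj_apply, inv_inv]
  constructor
  · rintro ⟨s, hs, rfl⟩
    simpa [mul_assoc] using hs
  · intro hy
    exact ⟨g * y * g⁻¹, hy, by group⟩

lemma conj_mem_conjSub {S : Subgroup X} {y : X} (g : X) (hy : y ∈ S) :
    g⁻¹ * y * g ∈ conjSub S g := by
  rwa [mem_conjSub_iff, show g * (g⁻¹ * y * g) * g⁻¹ = y by group]

lemma conjSub_mul (S : Subgroup X) (g h : X) :
    conjSub S (g * h) = conjSub (conjSub S g) h := by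
  ext y
  simp only [mem_conjSub_iff, mul_inv_rev, mul_assoc]

lemma conjSub_one (S : Subgroup X) : conjSub S 1 = S := by
  ext y
  simp [mem_conjSub_iff]

lemma conjSub_inv_eq_of_conjSub_eq {S T : Subgroup X} {g : X} (h : conjSub S g = T) :
    conjSub T g⁻¹ = S := by
  rw [← h, ← conjSub_mul, mul_inv_cancel, conjSub_one]

lemma conjSub_eq_self_of_mem {S : Subgroup X} {g : X} (hg : g ∈ S) : conjSub S g = S := by
  ext y
  rw [mem_conjSub_iff]
  exact ⟨fun h => by simpa [mul_assoc] using S.mul_mem (S.mul_mem (S.inv_mem hg) h) hg,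
    fun h => S.mul_mem (S.mul_mem hg h) (S.inv_mem hg)⟩

lemma mem_normalizer_of_conjSub_eq_self {S : Subgroup X} {g : X} (h : conjSub S g = S) :
    g ∈ Subgroup.normalizer (S : Set X) :=
  Subgroup.mem_normalizer_iff.mpr fun y => by
    rw [← mem_conjSub_iff, h]

end conjSub

namespace RankOne

variable {X : Type*} [Group X] {A B : Subgroup X} {bf : X → X}

def IsPartnerMap (A B : Subgroup X) (bf : X → X) : Prop :=
  ∀ a ∈ A, a ≠ 1 → bf a ∈ B ∧ conjSub A (bf a) = conjSub B a

def mu (bf : X → X) (a : X) : X := bf a * a⁻¹ * bf a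

lemma eq_one_of_conjSub_eq_self (hAB : A ≠ B) (hbf : IsPartnerMap A B bf)
    {y : X} (hy : y ∈ A) (hyB : conjSub B y = B) : y = 1 := by
  by_contra hy1
  obtain ⟨hbB, hb⟩ := hbf y hy hy1
  apply hAB
  rw [← conjSub_inv_eq_of_conjSub_eq (hb.trans hyB), conjSub_eq_self_of_mem (B.inv_mem hbB)]

lemma injOn_conjSub (hAB : A ≠ B)
    (hbf : IsPartnerMap A B bf) :
    Set.InjOn (conjSub B) A := by
  intro y hy z hz hyz
  have h : conjSub B (y * z⁻¹) = B := by
    rw [conjSub_mul, hyz, conjSub_inv_eq_of_conjSub_eq rfl]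
  exact mul_inv_eq_one.mp (eq_one_of_conjSub_eq_self hAB hbf (A.mul_mem hy (A.inv_mem hz)) h)

lemma conjSub_mu_left (hbf : IsPartnerMap A B bf)
    {a : X} (ha : a ∈ A) (ha1 : a ≠ 1) : conjSub A (mu bf a) = B := by
  obtain ⟨hbB, hb⟩ := hbf a ha ha1
  rw [mu, conjSub_mul, conjSub_mul A, hb, ← conjSub_mul B a, mul_inv_cancel, conjSub_one,
    conjSub_eq_self_of_mem hbB]

lemma conjSub_mu_right (hbf : IsPartnerMap A B bf)
    {a : X} (ha : a ∈ A) (ha1 : a ≠ 1) (hsp : bf a⁻¹ = (bf a)⁻¹) :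
    conjSub B (mu bf a) = A := by
  obtain ⟨hbB, -⟩ := hbf a ha ha1
  obtain ⟨-, hb'⟩ := hbf a⁻¹ (A.inv_mem ha) (inv_ne_one.mpr ha1)
  rw [hsp] at hb'
  rw [mu, conjSub_mul, conjSub_mul, conjSub_eq_self_of_mem hbB, ← hb', ← conjSub_mul,
    inv_mul_cancel, conjSub_one]

lemma mul_mu (hAB : A ≠ B) (hbf : IsPartnerMap A B bf)
    {a : X} (ha : a ∈ A) (ha1 : a ≠ 1) (hsp : bf a⁻¹ = (bf a)⁻¹) :
    a * mu bf a = bf a * a⁻¹ := by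
  obtain ⟨hbB, -⟩ := hbf a ha ha1
  set n := mu bf a
  have hyA : n⁻¹ * bf a * n ∈ A := conjSub_mu_right hbf ha ha1 hsp ▸ conj_mem_conjSub n hbB
  have hzB : n⁻¹ * a * n ∈ B := conjSub_mu_left hbf ha ha1 ▸ conj_mem_conjSub n ha
  have hu : a * (n⁻¹ * bf a * n) = bf a * (n⁻¹ * a * n) := by simp only [n, mu]; group
  have hu1 : a * (n⁻¹ * bf a * n) = 1 :=
    eq_one_of_conjSub_eq_self hAB hbf (A.mul_mem ha hyA)
      (conjSub_eq_self_of_mem (hu ▸ B.mul_mem hbB hzB))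
  have hn : bf a * n = n * a⁻¹ := by
    rw [inv_eq_of_mul_eq_one_right hu1]
    group
  calc a * n = a * (bf a)⁻¹ * (bf a * n) := by group
    _ = a * (bf a)⁻¹ * (n * a⁻¹) := by rw [hn]
    _ = bf a * a⁻¹ := by simp only [n, mu]; group

lemma bf_mul_bf_ne_one (hAB : A ≠ B) (hbf : IsPartnerMap A B bf)
    {a c : X} (ha : a ∈ A) (ha1 : a ≠ 1) (hsp : bf a⁻¹ = (bf a)⁻¹) (hc : c ∈ A) (hc1 : c ≠ 1)
    (hac : a * c ≠ 1) : bf a * bf c ≠ 1 := by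
  intro h
  have hconj : conjSub B c = conjSub B a⁻¹ := by
    rw [← (hbf c hc hc1).2, ← (hbf a⁻¹ (A.inv_mem ha) (inv_ne_one.mpr ha1)).2, hsp,
      eq_inv_of_mul_eq_one_right h]
  exact hac (by rw [injOn_conjSub hAB hbf hc (A.inv_mem ha) hconj, mul_inv_cancel])

lemma conj_bf_mul_eq (hAB : A ≠ B) (hbf : IsPartnerMap A B bf)
    {a c x : X} (ha : a ∈ A) (ha1 : a ≠ 1) (hsp : bf a⁻¹ = (bf a)⁻¹) (hc : c ∈ A) (hc1 : c ≠ 1)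
    (hca : c * a ≠ 1) (hx : x ∈ A) (hxb : conjSub B x = conjSub A (bf c * bf a)) :
    (mu bf a)⁻¹ * bf (c * a) * mu bf a = x * a⁻¹ := by
  obtain ⟨hbB, hb⟩ := hbf (c * a) (A.mul_mem hc ha) hca
  have hmem : (mu bf a)⁻¹ * bf (c * a) * mu bf a ∈ A :=
    conjSub_mu_right hbf ha ha1 hsp ▸ conj_mem_conjSub _ hbB
  refine injOn_conjSub hAB hbf hmem (A.mul_mem hx (A.inv_mem ha)) ?_
  calc conjSub B ((mu bf a)⁻¹ * bf (c * a) * mu bf a)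
      = conjSub (conjSub (conjSub B (mu bf a)⁻¹) (bf (c * a))) (mu bf a) := by
        rw [conjSub_mul, conjSub_mul]
    _ = conjSub B (c * (a * mu bf a)) := by
        rw [conjSub_inv_eq_of_conjSub_eq (conjSub_mu_left hbf ha ha1), hb, ← conjSub_mul,
          mul_assoc]
    _ = conjSub (conjSub (conjSub B c) (bf a)) a⁻¹ := by
        rw [mul_mu hAB hbf ha ha1 hsp, ← conjSub_mul, ← conjSub_mul]
    _ = conjSub B (x * a⁻¹) := by
        rw [← (hbf c hc hc1).2, ← conjSub_mul A (bf c), ← hxb, conjSub_mul]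

lemma mu_inv_mul_mu_mem (hbf : IsPartnerMap A B bf)
    {a c : X} (ha : a ∈ A) (ha1 : a ≠ 1) (hsp : bf a⁻¹ = (bf a)⁻¹) (hc : c ∈ A) (hc1 : c ≠ 1)
    (hspc : bf c⁻¹ = (bf c)⁻¹) :
    (mu bf a)⁻¹ * mu bf c ∈
      Subgroup.normalizer (A : Set X) ⊓ Subgroup.normalizer (B : Set X) :=
  ⟨mem_normalizer_of_conjSub_eq_self <| by
      rw [conjSub_mul, conjSub_inv_eq_of_conjSub_eq (conjSub_mu_right hbf ha ha1 hsp),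
        conjSub_mu_right hbf hc hc1 hspc],
    mem_normalizer_of_conjSub_eq_self <| by
      rw [conjSub_mul, conjSub_inv_eq_of_conjSub_eq (conjSub_mu_left hbf ha ha1),
        conjSub_mu_left hbf hc hc1]⟩

end RankOne

open RankOne commutatorElement in
theorem stmt6_general
    {X : Type*} [Group X] (A B : Subgroup X) (hAB : A ≠ B)
    (hAcomm : IsMulCommutative A) (hBcomm : IsMulCommutative B)
    (hba : ∀ b ∈ B, b ≠ 1 → ∃ a ∈ A, a ≠ 1 ∧ conjSub B a = conjSub A b)
    (bf : X → X)
    (hbf : ∀ a ∈ A, a ≠ 1 → bf a ∈ B ∧ bf a ≠ 1 ∧ conjSub A (bf a) = conjSub B a)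
    (hspecial : ∀ a ∈ A, a ≠ 1 → bf a⁻¹ = (bf a)⁻¹)
    (a₁ a₂ : X) (ha₁ : a₁ ∈ A) (ha₁1 : a₁ ≠ 1) (ha₂ : a₂ ∈ A) (ha₂1 : a₂ ≠ 1)
    (h12 : a₁ * a₂ ≠ 1) :
    a₂⁻¹ * a₁ ∈ ⁅A, Subgroup.normalizer (A : Set X) ⊓ Subgroup.normalizer (B : Set X)⁆ := by
  have hbf' : IsPartnerMap A B bf :=
    fun a ha ha1 => ⟨(hbf a ha ha1).1, (hbf a ha ha1).2.2⟩
  have hsp₁ := hspecial a₁ ha₁ ha₁1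
  have hsp₂ := hspecial a₂ ha₂ ha₂1
  have hcommA : a₁ * a₂ = a₂ * a₁ := setLike_mul_comm ha₁ ha₂
  obtain ⟨x, hx, -, hxb⟩ := hba (bf a₁ * bf a₂) (B.mul_mem (hbf' a₁ ha₁ ha₁1).1
    (hbf' a₂ ha₂ ha₂1).1) (bf_mul_bf_ne_one hAB hbf' ha₁ ha₁1 hsp₁ ha₂ ha₂1 h12)
  have he₁ : (mu bf a₁)⁻¹ * bf (a₁ * a₂) * mu bf a₁ = x * a₁⁻¹ := by
    rw [hcommA] at h12 ⊢
    refine conj_bf_mul_eq hAB hbf' ha₁ ha₁1 hsp₁ ha₂ ha₂1 h12 hx ?_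
    rw [hxb, setLike_mul_comm (hbf' a₁ ha₁ ha₁1).1 (hbf' a₂ ha₂ ha₂1).1]
  have he₂ : (mu bf a₂)⁻¹ * bf (a₁ * a₂) * mu bf a₂ = x * a₂⁻¹ :=
    conj_bf_mul_eq hAB hbf' ha₂ ha₂1 hsp₂ ha₁ ha₁1 h12 hx hxb
  have hdiff : a₂⁻¹ * a₁ = ⁅(x * a₁⁻¹)⁻¹, ((mu bf a₁)⁻¹ * mu bf a₂)⁻¹⁆ :=
    calc a₂⁻¹ * a₁ = (x * a₁⁻¹)⁻¹ * (x * a₂⁻¹) := by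
          rw [← setLike_mul_comm ha₁ (A.inv_mem ha₂)]; group
      _ = _ := by rw [← he₁, ← he₂, commutatorElement_def]; group
  rw [hdiff]
  exact Subgroup.commutator_mem_commutator (A.inv_mem (A.mul_mem hx (A.inv_mem ha₁)))
    (inv_mem (mu_inv_mul_mu_mem hbf' ha₁ ha₁1 hsp₁ ha₂ ha₂1 hsp₂))

theorem stmt6
    {X : Type*} [Group X] (A B : Subgroup X) (hAB : A ≠ B)
    (hAcomm : IsMulCommutative A) (hBcomm : IsMulCommutative B)
    (hgen : A ⊔ B = ⊤)
    (hab : ∀ a ∈ A, a ≠ 1 → ∃ b ∈ B, b ≠ 1 ∧ conjSub A b = conjSub B a)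
    (hba : ∀ b ∈ B, b ≠ 1 → ∃ a ∈ A, a ≠ 1 ∧ conjSub B a = conjSub A b)
    (bf : X → X)
    (hbf : ∀ a ∈ A, a ≠ 1 → bf a ∈ B ∧ bf a ≠ 1 ∧ conjSub A (bf a) = conjSub B a)
    (hbfu : ∀ a ∈ A, a ≠ 1 → ∀ b ∈ B, b ≠ 1 → conjSub A b = conjSub B a → b = bf a)
    (hspecial : ∀ a ∈ A, a ≠ 1 → bf a⁻¹ = (bf a)⁻¹)
    (a₁ a₂ : X) (ha₁ : a₁ ∈ A) (ha₁1 : a₁ ≠ 1) (ha₂ : a₂ ∈ A) (ha₂1 : a₂ ≠ 1)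
    (h12 : a₁ * a₂ ≠ 1) :
    a₂⁻¹ * a₁ ∈ ⁅A, Subgroup.normalizer (A : Set X) ⊓ Subgroup.normalizer (B : Set X)⁆ :=
  stmt6_general A B hAB hAcomm hBcomm hba bf hbf hspecial a₁ a₂ ha₁ ha₁1 ha₂ ha₂1 h12
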